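/- arXiv:math/0407169 — 2 statements merged into one kernel-verified Lean document; each statement's English description precedes it below -/
import Mathlib

section
/- Let s ≥ 2 and u ≥ 0, d = s² + su, α = d - 2s - u + 1. Define Δ : ℤ → ℤ by Δ(j) = 0 for j < 0; Δ(j) = j+1 for 0 ≤ j ≤ α-1; Δ(j) = α - C(j-α+1, 2) for α ≤ j ≤ d-s-u-2; Δ(j) = C(s,2) + (d-s-1-j)(s-1) for d-s-u-1 ≤ j ≤ d-s-2; Δ(j) = C(d-1-j, 2) for d-s-1 ≤ j ≤ d-3; Δ(j) = 0 for j > d-3. Then Σ_{j ∈ ℤ} Δ(j) = (d-1)(d-2)/2 - g, where g = (1/2)s(s+u)(2s+u-4) + 1 is the genus of a complete intersection of type (s, s+u). -/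
private lemma ioc_split (f : ℤ → ℚ) {a b c : ℤ} (h1 : a ≤ b) (h2 : b ≤ c) :
    ∑ j ∈ Finset.Ioc a c, f j = ∑ j ∈ Finset.Ioc a b, f j + ∑ j ∈ Finset.Ioc b c, f j := by
  rw [← Finset.Ioc_union_Ioc_eq_Ioc h1 h2, Finset.sum_union]
  rw [Finset.disjoint_left]
  intro x hx hx'
  simp only [Finset.mem_Ioc] at hx hx'
  omega

private lemma ioc_singleton (b : ℤ) : Finset.Ioc b (b + 1) = {b + 1} := by
  ext x; simp only [Finset.mem_Ioc, Finset.mem_singleton]; omega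

private lemma sum_quad (p q r : ℚ) : ∀ (n : ℕ) (a : ℤ),
    ∑ j ∈ Finset.Ioc a (a + (n : ℤ)), (p * (j : ℚ) ^ 2 + q * (j : ℚ) + r)
      = n * (p * (a : ℚ) ^ 2 + q * a + r) + (2 * p * a + q) * (n * (n + 1)) / 2
        + p * (n * (n + 1) * (2 * n + 1)) / 6 := by
  intro n
  induction n with
  | zero => intro a; simp
  | succ n ih =>
    intro a
    have hsplit := ioc_split (fun j => p * (j : ℚ) ^ 2 + q * (j : ℚ) + r)
      (show a ≤ a + (n : ℤ) by omega) (show a + (n : ℤ) ≤ a + ((n : ℕ) + 1 : ℕ) by push_cast; omega)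
    rw [show (a + ((n : ℕ) + 1 : ℕ) : ℤ) = a + (n : ℤ) + 1 by push_cast; ring] at hsplit ⊢
    rw [hsplit, ih, ioc_singleton, Finset.sum_singleton]
    push_cast
    ring

private lemma key (p q r : ℚ) (n : ℕ) (a b : ℤ) (hb : b = a + (n : ℤ)) (f : ℤ → ℚ)
    (hf : ∀ j ∈ Finset.Ioc a b, f j = p * (j : ℚ) ^ 2 + q * (j : ℚ) + r) :
    ∑ j ∈ Finset.Ioc a b, f j
      = n * (p * (a : ℚ) ^ 2 + q * a + r) + (2 * p * a + q) * (n * (n + 1)) / 2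
        + p * (n * (n + 1) * (2 * n + 1)) / 6 := by
  rw [Finset.sum_congr rfl hf, hb, sum_quad]

theorem stmt_10 (s u d α : ℤ) (hs : 2 ≤ s) (hu : 0 ≤ u)
    (hd : d = s ^ 2 + s * u) (hα : α = d - 2 * s - u + 1)
    (Δ : ℤ → ℤ)
    (hneg : ∀ j, j < 0 → Δ j = 0)
    (h1 : ∀ j, 0 ≤ j → j ≤ α - 1 → Δ j = j + 1)
    (h2 : ∀ j, α ≤ j → j ≤ d - s - u - 2 → Δ j = α - (j - α + 1) * (j - α) / 2)
    (h3 : ∀ j, d - s - u - 1 ≤ j → j ≤ d - s - 2 →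
      Δ j = s * (s - 1) / 2 + (d - s - 1 - j) * (s - 1))
    (h4 : ∀ j, d - s - 1 ≤ j → j ≤ d - 3 → Δ j = (d - 1 - j) * (d - 2 - j) / 2)
    (hbig : ∀ j, d - 3 < j → Δ j = 0) :
    ((∑ j ∈ Finset.Icc (0 : ℤ) (d - 3), Δ j : ℤ) : ℚ)
      = ((d : ℚ) - 1) * ((d : ℚ) - 2) / 2
        - ((s : ℚ) * ((s : ℚ) + (u : ℚ)) * (2 * (s : ℚ) + (u : ℚ) - 4) / 2 + 1) := by
  have hα1 : 1 ≤ α := by nlinarith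
  have hcast : ((∑ j ∈ Finset.Icc (0 : ℤ) (d - 3), Δ j : ℤ) : ℚ)
      = ∑ j ∈ Finset.Icc (0 : ℤ) (d - 3), ((Δ j : ℤ) : ℚ) := by push_cast; rfl
  have hicc : Finset.Icc (0 : ℤ) (d - 3) = Finset.Ioc (-1 : ℤ) (d - 3) := by
    ext x; simp only [Finset.mem_Icc, Finset.mem_Ioc]; omega
  rw [hcast, hicc]
  rw [ioc_split (fun j => ((Δ j : ℤ) : ℚ)) (show (-1 : ℤ) ≤ α - 1 by omega)
      (show α - 1 ≤ d - 3 by omega),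
    ioc_split (fun j => ((Δ j : ℤ) : ℚ)) (show α - 1 ≤ d - s - u - 2 by omega)
      (show d - s - u - 2 ≤ d - 3 by omega),
    ioc_split (fun j => ((Δ j : ℤ) : ℚ)) (show d - s - u - 2 ≤ d - s - 2 by omega)
      (show d - s - 2 ≤ d - 3 by omega)]
  rw [key 0 1 1 α.toNat (-1) (α - 1) (by omega) _ (by
      intro j hj
      simp only [Finset.mem_Ioc] at hj
      rw [h1 j (by omega) (by omega)]
      push_cast; ring)]
  rw [key (-(1/2)) ((2 * (α : ℚ) - 1) / 2) ((α : ℚ) - ((α : ℚ) ^ 2 - (α : ℚ)) / 2)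
      (s - 2).toNat (α - 1) (d - s - u - 2) (by omega) _ (by
      intro j hj
      simp only [Finset.mem_Ioc] at hj
      rw [h2 j (by omega) (by omega)]
      have hdvd : (2 : ℤ) ∣ (j - α + 1) * (j - α) := by
        have h := (Int.even_mul_succ_self (j - α)).two_dvd
        rwa [mul_comm] at h
      push_cast [Int.cast_div_charZero hdvd]
      ring)]
  rw [key 0 (-((s : ℚ) - 1)) ((s : ℚ) * ((s : ℚ) - 1) / 2 + ((d : ℚ) - s - 1) * ((s : ℚ) - 1))
      u.toNat (d - s - u - 2) (d - s - 2) (by omega) _ (by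
      intro j hj
      simp only [Finset.mem_Ioc] at hj
      rw [h3 j (by omega) (by omega)]
      have hdvd : (2 : ℤ) ∣ s * (s - 1) := by
        have h := (Int.even_mul_succ_self (s - 1)).two_dvd
        rwa [show (s - 1) * (s - 1 + 1) = s * (s - 1) by ring] at h
      push_cast [Int.cast_div_charZero hdvd]
      ring)]
  rw [key (1/2) (-(2 * (d : ℚ) - 3) / 2) (((d : ℚ) - 1) * ((d : ℚ) - 2) / 2)
      (s - 1).toNat (d - s - 2) (d - 3) (by omega) _ (by
      intro j hj
      simp only [Finset.mem_Ioc] at hj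
      rw [h4 j (by omega) (by omega)]
      have hdvd : (2 : ℤ) ∣ (d - 1 - j) * (d - 2 - j) := by
        have h := (Int.even_mul_succ_self (d - 2 - j)).two_dvd
        rwa [show (d - 2 - j) * (d - 2 - j + 1) = (d - 1 - j) * (d - 2 - j) by ring] at h
      push_cast [Int.cast_div_charZero hdvd]
      ring)]
  have cα : ((α.toNat : ℚ)) = (α : ℚ) := by
    rw [← Int.cast_natCast, Int.toNat_of_nonneg (by omega)]
  have cs2 : (((s - 2).toNat : ℚ)) = (s : ℚ) - 2 := by
    rw [← Int.cast_natCast, Int.toNat_of_nonneg (by omega)]; push_cast; ring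
  have cu : ((u.toNat : ℚ)) = (u : ℚ) := by
    rw [← Int.cast_natCast, Int.toNat_of_nonneg (by omega)]
  have cs1 : (((s - 1).toNat : ℚ)) = (s : ℚ) - 1 := by
    rw [← Int.cast_natCast, Int.toNat_of_nonneg (by omega)]; push_cast; ring
  rw [cα, cs2, cu, cs1]
  push_cast
  have hdq : (d : ℚ) = (s : ℚ) ^ 2 + (s : ℚ) * (u : ℚ) := by exact_mod_cast congrArg (Int.cast : ℤ → ℚ) hd
  have hαq : (α : ℚ) = (d : ℚ) - 2 * (s : ℚ) - (u : ℚ) + 1 := by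
    exact_mod_cast congrArg (Int.cast : ℤ → ℚ) hα
  rw [hαq, hdq]
  ring
end

section
/- (No (-2)-curve argument on Mori quartic.) Let v ≥ 1 and let x, y, p be integers with 1 ≤ p ≤ v-2, (v+3)x + 4y = p, and 2(v-1)x² + 2(v+3)xy + 4y² = -2. Then there is a contradiction; i.e., no such integers exist. Equivalently: for integers v ≥ 3, p with 1 ≤ p ≤ v-2, the quantity (p² + 8)/((v+3)² - 8(v-1)) is strictly less than 1, and x² equals this quantity, forcing x = 0, which is incompatible with the equations. -/
/-!
Eliminating `y` between the degree equation and the self-intersection equation (square the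
first, subtract four times the second) gives `((v - 1)² + 16) x² = p² + 8`. For `0 ≤ p ≤ v - 2`
the right-hand side is smaller than `(v - 1)² + 16`, so `x = 0`; but then the self-intersection
equation reads `4 y² = -2`.
-/

theorem sq_degree_sub_four_mul_selfIntersection {R : Type*} [CommRing R] (v x y : R) :
    ((v + 3) * x + 4 * y) ^ 2 - 4 * (2 * (v - 1) * x ^ 2 + 2 * (v + 3) * x * y + 4 * y ^ 2) =
      ((v - 1) ^ 2 + 16) * x ^ 2 := by
  ring

theorem sq_add_eight_lt {v p : ℤ} (hp1 : 0 ≤ p) (hp2 : p ≤ v - 2) :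
    p ^ 2 + 8 < (v - 1) ^ 2 + 16 := by
  nlinarith

theorem stmt_18_general (v x y p : ℤ) (hp1 : 1 ≤ p) (hp2 : p ≤ v - 2)
    (h1 : (v + 3) * x + 4 * y = p)
    (h2 : 2 * (v - 1) * x ^ 2 + 2 * (v + 3) * x * y + 4 * y ^ 2 = -2) :
    False := by
  have hdisc : ((v - 1) ^ 2 + 16) * x ^ 2 = p ^ 2 + 8 := by
    rw [← sq_degree_sub_four_mul_selfIntersection, h1, h2]
    ring
  have hx : x ≠ 0 := by
    rintro rfl
    nlinarith [sq_nonneg y]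
  have hx2 : 1 ≤ x ^ 2 := (one_le_sq_iff_one_le_abs x).mpr (Int.one_le_abs hx)
  refine lt_irrefl ((v - 1) ^ 2 + 16) ?_
  calc (v - 1) ^ 2 + 16 ≤ ((v - 1) ^ 2 + 16) * x ^ 2 := le_mul_of_one_le_right (by positivity) hx2
    _ = p ^ 2 + 8 := hdisc
    _ < (v - 1) ^ 2 + 16 := sq_add_eight_lt (by omega) hp2

theorem stmt_18 (v x y p : ℤ) (hv : 1 ≤ v) (hp1 : 1 ≤ p) (hp2 : p ≤ v - 2)
    (h1 : (v + 3) * x + 4 * y = p)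
    (h2 : 2 * (v - 1) * x ^ 2 + 2 * (v + 3) * x * y + 4 * y ^ 2 = -2) :
    False :=
  stmt_18_general v x y p hp1 hp2 h1 h2
end
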